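/- arXiv:1904.10387 — 4 statements merged into one kernel-verified Lean document; each statement's English description precedes it below -/
import Mathlib

section
/- (Exact inference for features in the span of the canonical variables.) Assume the representation p(x,y) = p_X(x) p_Y(y) Σ_{j=1}^D η_j a_j(x) b_j(y) with Σ_x p_X(x) a_i(x) a_j(x) = δ_{ij} and Σ_y p_Y(y) b_i(y) b_j(y) = δ_{ij}. Fix 1 ≤ k₀ ≤ D and let f_1,…,f_{k₀} : X → ℝ and g_1,…,g_{k₀} : Y → ℝ be such that span{f_1,…,f_{k₀}} = span{a_1,…,a_{k₀}} in ℝ^X and span{g_1,…,g_{k₀}} = span{b_1,…,b_{k₀}} in ℝ^Y, with K_{ij} = Σ_x p_X(x) f_i(x) f_j(x) invertible and A_{kj} = Σ_{x,y} p(x,y) g_k(y) f_j(x). Then for every k ≤ k₀ and every x ∈ X, the exact conditional expectation is given by the truncated formula: Σ_y (p(x,y)/p_X(x)) g_k(y) = Σ_{j=1}^{k₀} (A K⁻¹)_{kj} f_j(x). -/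
open Finset Matrix

private lemma sum_delta1 {k₀ : ℕ} {ι : Type*} [Fintype ι] [DecidableEq ι]
    (e : Fin k₀ → ι) (he : Function.Injective e) (w : ι → ℝ) (d : Fin k₀ → ℝ) :
    ∑ j', w j' * (∑ n, d n * (if j' = e n then 1 else 0)) = ∑ n, w (e n) * d n := by
  rw [show (Finset.univ : Finset (Fin k₀)) = Finset.univ from rfl]
  have hsub : (Finset.univ.map ⟨e, he⟩ : Finset ι) ⊆ Finset.univ := Finset.subset_univ _
  have hvan : ∀ j' ∈ (Finset.univ : Finset ι), j' ∉ Finset.univ.map ⟨e, he⟩ →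
      w j' * (∑ n, d n * (if j' = e n then 1 else 0)) = 0 := by
    intro j' _ hj'
    have : ∀ n : Fin k₀, j' ≠ e n := by
      intro n hn
      exact hj' (Finset.mem_map.mpr ⟨n, Finset.mem_univ n, hn.symm⟩)
    simp [this]
  rw [← Finset.sum_subset hsub hvan, Finset.sum_map]
  refine Finset.sum_congr rfl fun n _ => ?_
  have : ∀ m : Fin k₀, (e n = e m) ↔ (n = m) := fun m => he.eq_iff
  simp [Function.Embedding.coeFn_mk, this, mul_ite, mul_one, mul_zero,
    Finset.sum_ite_eq]

private lemma sum_delta2 {k₀ : ℕ} {ι : Type*} [Fintype ι] [DecidableEq ι]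
    (e : Fin k₀ → ι) (he : Function.Injective e) (η : ι → ℝ) (c d : Fin k₀ → ℝ) :
    ∑ j', η j' * (∑ m, c m * (if j' = e m then 1 else 0))
        * (∑ n, d n * (if j' = e n then 1 else 0))
      = ∑ m, η (e m) * c m * d m := by
  have hsub : (Finset.univ.map ⟨e, he⟩ : Finset ι) ⊆ Finset.univ := Finset.subset_univ _
  have hvan : ∀ j' ∈ (Finset.univ : Finset ι), j' ∉ Finset.univ.map ⟨e, he⟩ →
      η j' * (∑ m, c m * (if j' = e m then 1 else 0))
        * (∑ n, d n * (if j' = e n then 1 else 0)) = 0 := by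
    intro j' _ hj'
    have : ∀ n : Fin k₀, j' ≠ e n := by
      intro n hn
      exact hj' (Finset.mem_map.mpr ⟨n, Finset.mem_univ n, hn.symm⟩)
    simp [this]
  rw [← Finset.sum_subset hsub hvan, Finset.sum_map]
  refine Finset.sum_congr rfl fun n _ => ?_
  have : ∀ m : Fin k₀, (e n = e m) ↔ (n = m) := fun m => he.eq_iff
  simp [Function.Embedding.coeFn_mk, this, mul_ite, mul_one, mul_zero,
    Finset.sum_ite_eq]

/-- Exact inference for features in the span of the canonical variables: if
`f_1,…,f_{k₀}` and `g_1,…,g_{k₀}` span the same subspaces as the top `k₀` canonical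
variables `a_j`, `b_j`, then for every `k ≤ k₀` the exact conditional expectation of
`g_k` is given by the truncated formula `Σ_y p(y|x) g_k(y) = Σ_j (A K⁻¹)_{kj} f_j(x)`. -/
theorem stmt_11 (X Y : Type*) [Fintype X] [Fintype Y] [Nonempty X] [Nonempty Y]
    (p : X → Y → ℝ)
    (hp : ∀ x y, 0 ≤ p x y)
    (hsum : ∑ x, ∑ y, p x y = 1)
    (hpX : ∀ x, 0 < ∑ y, p x y)
    (hpY : ∀ y, 0 < ∑ x, p x y)
    (D : ℕ) (a : Fin D → X → ℝ) (b : Fin D → Y → ℝ) (η : Fin D → ℝ)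
    (ha : ∀ i j, ∑ x, (∑ y, p x y) * a i x * a j x = if i = j then (1 : ℝ) else 0)
    (hb : ∀ i j, ∑ y, (∑ x, p x y) * b i y * b j y = if i = j then (1 : ℝ) else 0)
    (hrep : ∀ x y,
      p x y = (∑ y', p x y') * (∑ x', p x' y) * ∑ j, η j * a j x * b j y)
    (k₀ : ℕ) (hk₀ : 1 ≤ k₀) (hk₀D : k₀ ≤ D)
    (f : Fin k₀ → X → ℝ) (g : Fin k₀ → Y → ℝ)
    (hfspan : Submodule.span ℝ (Set.range f)
      = Submodule.span ℝ (Set.range fun i : Fin k₀ => a (Fin.castLE hk₀D i)))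
    (hgspan : Submodule.span ℝ (Set.range g)
      = Submodule.span ℝ (Set.range fun i : Fin k₀ => b (Fin.castLE hk₀D i)))
    (K A : Matrix (Fin k₀) (Fin k₀) ℝ)
    (hK : ∀ i j, K i j = ∑ x, (∑ y, p x y) * f i x * f j x)
    (hKdet : IsUnit K.det)
    (hA : ∀ i j, A i j = ∑ x, ∑ y, p x y * g i y * f j x) :
    ∀ (k : Fin k₀) (x : X),
      ∑ y, (p x y / ∑ y', p x y') * g k y = ∑ j, (A * K⁻¹) k j * f j x := by
  intro k x
  set cL : Fin k₀ → Fin D := Fin.castLE hk₀D with hcLdef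
  have hcLinj : Function.Injective cL := Fin.castLE_injective hk₀D
  -- coefficients for f
  have hf : ∀ i, ∃ c : Fin k₀ → ℝ, ∀ x', f i x' = ∑ m, c m * a (cL m) x' := by
    intro i
    have hmem : f i ∈ Submodule.span ℝ (Set.range fun m : Fin k₀ => a (cL m)) := by
      rw [← hfspan]; exact Submodule.subset_span ⟨i, rfl⟩
    rw [Submodule.mem_span_range_iff_exists_fun] at hmem
    obtain ⟨c, hc⟩ := hmem
    refine ⟨c, fun x' => ?_⟩
    have := congrFun hc x'
    simpa [Finset.sum_apply] using this.symm
  choose Cm hCm using hf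
  -- coefficients for g
  have hg : ∀ i, ∃ c : Fin k₀ → ℝ, ∀ y', g i y' = ∑ m, c m * b (cL m) y' := by
    intro i
    have hmem : g i ∈ Submodule.span ℝ (Set.range fun m : Fin k₀ => b (cL m)) := by
      rw [← hgspan]; exact Submodule.subset_span ⟨i, rfl⟩
    rw [Submodule.mem_span_range_iff_exists_fun] at hmem
    obtain ⟨c, hc⟩ := hmem
    refine ⟨c, fun y' => ?_⟩
    have := congrFun hc y'
    simpa [Finset.sum_apply] using this.symm
  choose Gm hGm using hg
  -- inner products with canonical variables
  have hinf : ∀ (j' : Fin D) (i : Fin k₀),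
      ∑ x', (∑ y, p x' y) * a j' x' * f i x'
        = ∑ m, Cm i m * (if j' = cL m then 1 else 0) := by
    intro j' i
    have e1 : ∀ x', (∑ y, p x' y) * a j' x' * f i x'
        = ∑ m, Cm i m * ((∑ y, p x' y) * a j' x' * a (cL m) x') := by
      intro x'
      rw [hCm i x', Finset.mul_sum]
      exact Finset.sum_congr rfl fun m _ => by ring
    rw [Finset.sum_congr rfl fun x' _ => e1 x', Finset.sum_comm]
    refine Finset.sum_congr rfl fun m _ => ?_
    rw [← Finset.mul_sum, ha j' (cL m)]
  have hing : ∀ (j' : Fin D) (i : Fin k₀),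
      ∑ y', (∑ x', p x' y') * b j' y' * g i y'
        = ∑ m, Gm i m * (if j' = cL m then 1 else 0) := by
    intro j' i
    have e1 : ∀ y', (∑ x', p x' y') * b j' y' * g i y'
        = ∑ m, Gm i m * ((∑ x', p x' y') * b j' y' * b (cL m) y') := by
      intro y'
      rw [hGm i y', Finset.mul_sum]
      exact Finset.sum_congr rfl fun m _ => by ring
    rw [Finset.sum_congr rfl fun y' _ => e1 y', Finset.sum_comm]
    refine Finset.sum_congr rfl fun m _ => ?_
    rw [← Finset.mul_sum, hb j' (cL m)]
  -- matrices
  set Cmat : Matrix (Fin k₀) (Fin k₀) ℝ := Matrix.of Cm with hCmatdef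
  set Gmat : Matrix (Fin k₀) (Fin k₀) ℝ := Matrix.of Gm with hGmatdef
  set Dη : Matrix (Fin k₀) (Fin k₀) ℝ := Matrix.diagonal fun m => η (cL m) with hDηdef
  -- K = C Cᵀ
  have hKeq : K = Cmat * Cmatᵀ := by
    ext i j
    rw [hK i j]
    have e1 : ∀ x', (∑ y, p x' y) * f i x' * f j x'
        = ∑ m, Cm i m * ((∑ y, p x' y) * a (cL m) x' * f j x') := by
      intro x'
      rw [hCm i x', Finset.mul_sum, Finset.sum_mul]
      exact Finset.sum_congr rfl fun m _ => by ring
    rw [Finset.sum_congr rfl fun x' _ => e1 x', Finset.sum_comm]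
    rw [Matrix.mul_apply]
    refine Finset.sum_congr rfl fun m _ => ?_
    rw [← Finset.mul_sum, hinf (cL m) j]
    have : ∀ n : Fin k₀, (cL m = cL n) ↔ (m = n) := fun n => hcLinj.eq_iff
    simp [Matrix.transpose_apply, hCmatdef, this, mul_ite, mul_one, mul_zero,
      Finset.sum_ite_eq]
  have hCdet : IsUnit Cmat.det := by
    have h := hKdet
    rw [hKeq, Matrix.det_mul, Matrix.det_transpose] at h
    exact isUnit_of_mul_isUnit_left h
  have hCTdet : IsUnit Cmatᵀ.det := by rwa [Matrix.det_transpose]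
  -- A = G Dη Cᵀ
  have hAeq : A = Gmat * Dη * Cmatᵀ := by
    ext i j
    rw [hA i j]
    have step1 : ∀ x' y', p x' y' * g i y'
        * f j x' = ∑ j', η j' * ((∑ y, p x' y) * a j' x' * f j x')
          * ((∑ x'', p x'' y') * b j' y' * g i y') := by
      intro x' y'
      rw [hrep x' y']
      rw [Finset.mul_sum, Finset.sum_mul, Finset.sum_mul]
      exact Finset.sum_congr rfl fun j' _ => by ring
    calc ∑ x', ∑ y', p x' y' * g i y' * f j x'
        = ∑ x', ∑ y', ∑ j', η j' * ((∑ y, p x' y) * a j' x' * f j x')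
          * ((∑ x'', p x'' y') * b j' y' * g i y') :=
          Finset.sum_congr rfl fun x' _ => Finset.sum_congr rfl fun y' _ => step1 x' y'
      _ = ∑ j', ∑ x', ∑ y', η j' * ((∑ y, p x' y) * a j' x' * f j x')
          * ((∑ x'', p x'' y') * b j' y' * g i y') := by
          rw [Finset.sum_congr rfl fun x' (_ : x' ∈ Finset.univ) => Finset.sum_comm]
          exact Finset.sum_comm
      _ = ∑ j', η j' * (∑ x', (∑ y, p x' y) * a j' x' * f j x')
          * (∑ y', (∑ x'', p x'' y') * b j' y' * g i y') := by
          refine Finset.sum_congr rfl fun j' _ => ?_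
          conv_rhs => rw [mul_assoc, Finset.sum_mul_sum, Finset.mul_sum]
          refine Finset.sum_congr rfl fun x' _ => ?_
          rw [Finset.mul_sum]
          exact Finset.sum_congr rfl fun y' _ => by ring
      _ = ∑ j', η j' * (∑ m, Cm j m * (if j' = cL m then 1 else 0))
          * (∑ n, Gm i n * (if j' = cL n then 1 else 0)) := by
          refine Finset.sum_congr rfl fun j' _ => ?_
          rw [hinf j' j, hing j' i]
      _ = ∑ m, η (cL m) * Cm j m * Gm i m := sum_delta2 cL hcLinj η (Cm j) (Gm i)
      _ = (Gmat * Dη * Cmatᵀ) i j := by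
          rw [Matrix.mul_apply]
          refine Finset.sum_congr rfl fun m _ => ?_
          rw [Matrix.mul_diagonal]
          simp [hGmatdef, hCmatdef, Matrix.transpose_apply]
          ring
  -- A K⁻¹ C = G Dη
  have hMC : A * K⁻¹ * Cmat = Gmat * Dη := by
    rw [hAeq, hKeq, Matrix.mul_inv_rev]
    calc Gmat * Dη * Cmatᵀ * (Cmatᵀ⁻¹ * Cmat⁻¹) * Cmat
        = Gmat * Dη * (Cmatᵀ * Cmatᵀ⁻¹) * (Cmat⁻¹ * Cmat) := by
          simp only [Matrix.mul_assoc]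
      _ = Gmat * Dη := by
          rw [Matrix.mul_nonsing_inv _ hCTdet, Matrix.nonsing_inv_mul _ hCdet,
            Matrix.mul_one, Matrix.mul_one]
  -- RHS computation
  have hRHS : ∑ j, (A * K⁻¹) k j * f j x = ∑ m, Gm k m * η (cL m) * a (cL m) x := by
    calc ∑ j, (A * K⁻¹) k j * f j x
        = ∑ j, ∑ m, (A * K⁻¹) k j * Cm j m * a (cL m) x := by
          refine Finset.sum_congr rfl fun j _ => ?_
          rw [hCm j x, Finset.mul_sum]
          exact Finset.sum_congr rfl fun m _ => by ring
      _ = ∑ m, (∑ j, (A * K⁻¹) k j * Cm j m) * a (cL m) x := by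
          rw [Finset.sum_comm]
          exact Finset.sum_congr rfl fun m _ => by rw [Finset.sum_mul]
      _ = ∑ m, (A * K⁻¹ * Cmat) k m * a (cL m) x := by
          refine Finset.sum_congr rfl fun m _ => ?_
          rw [Matrix.mul_apply]
          rfl
      _ = ∑ m, Gm k m * η (cL m) * a (cL m) x := by
          refine Finset.sum_congr rfl fun m _ => ?_
          rw [hMC, Matrix.mul_diagonal]
          simp [hGmatdef]
  -- LHS computation
  have hpXne : (∑ y', p x y') ≠ 0 := ne_of_gt (hpX x)
  have hLHS : ∑ y, (p x y / ∑ y', p x y') * g k y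
      = ∑ m, Gm k m * η (cL m) * a (cL m) x := by
    have hdiv : ∀ y, p x y / (∑ y', p x y')
        = (∑ x', p x' y) * ∑ j', η j' * a j' x * b j' y := by
      intro y
      rw [hrep x y]
      field_simp
    have e1 : ∀ y, (p x y / ∑ y', p x y') * g k y
        = ∑ j', (η j' * a j' x) * ((∑ x', p x' y) * b j' y * g k y) := by
      intro y
      rw [hdiv y, Finset.mul_sum, Finset.sum_mul]
      exact Finset.sum_congr rfl fun j' _ => by ring
    calc ∑ y, (p x y / ∑ y', p x y') * g k y
        = ∑ j', ∑ y, (η j' * a j' x) * ((∑ x', p x' y) * b j' y * g k y) := by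
          rw [Finset.sum_congr rfl fun y _ => e1 y]
          exact Finset.sum_comm
      _ = ∑ j', (η j' * a j' x) * (∑ n, Gm k n * (if j' = cL n then 1 else 0)) := by
          refine Finset.sum_congr rfl fun j' _ => ?_
          rw [← Finset.mul_sum, hing j' k]
      _ = ∑ m, (η (cL m) * a (cL m) x) * Gm k m :=
          sum_delta1 cL hcLinj (fun j' => η j' * a j' x) (Gm k)
      _ = ∑ m, Gm k m * η (cL m) * a (cL m) x :=
          Finset.sum_congr rfl fun m _ => by ring
  rw [hLHS, hRHS]
end

section
/- (Variational characterization of the top nontrivial canonical correlation.) Assume the representation p(x,y) = p_X(x) p_Y(y) Σ_{j=1}^D η_j a_j(x) b_j(y) with Σ_x p_X(x) a_i(x) a_j(x) = δ_{ij}, Σ_y p_Y(y) b_i(y) b_j(y) = δ_{ij}, a_1 ≡ 1, b_1 ≡ 1, and 1 = η_1 ≥ η_2 ≥ … ≥ η_D ≥ 0. Then for all f : X → ℝ and g : Y → ℝ with Σ_x p_X(x) f(x) = 0, Σ_y p_Y(y) g(y) = 0, Σ_x p_X(x) f(x)² = 1, and Σ_y p_Y(y) g(y)² = 1, one has Σ_{x,y}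 p(x,y) f(x) g(y) ≤ η_2; moreover, if D ≥ 2, equality holds for f = a_2 and g = b_2. -/
open Finset

lemma bessel_aux {X : Type*} [Fintype X] {D : ℕ} (q : X → ℝ) (hq : ∀ x, 0 ≤ q x)
    (a : Fin D → X → ℝ)
    (ha : ∀ i j, ∑ x, q x * a i x * a j x = if i = j then (1:ℝ) else 0)
    (f : X → ℝ) (hf : ∑ x, q x * f x ^ 2 = 1) :
    ∑ j, (∑ x, q x * f x * a j x)^2 ≤ 1 := by
  set α : Fin D → ℝ := fun j => ∑ x, q x * f x * a j x with hα
  have h0 : 0 ≤ ∑ x, q x * (f x - ∑ j, α j * a j x)^2 :=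
    Finset.sum_nonneg fun x _ => mul_nonneg (hq x) (sq_nonneg _)
  have step : ∀ x : X, q x * (f x - ∑ j, α j * a j x)^2
      = q x * f x ^ 2 - 2 * (∑ j, α j * (q x * f x * a j x))
        + ∑ j, ∑ k, α j * α k * (q x * a j x * a k x) := by
    intro x
    have e1 : q x * f x * (∑ j, α j * a j x) = ∑ j, α j * (q x * f x * a j x) := by
      rw [Finset.mul_sum]; exact Finset.sum_congr rfl fun j _ => by ring
    have e2 : q x * ((∑ j, α j * a j x) * (∑ k, α k * a k x))
        = ∑ j, ∑ k, α j * α k * (q x * a j x * a k x) := by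
      rw [Finset.sum_mul_sum, Finset.mul_sum]
      refine Finset.sum_congr rfl fun j _ => ?_
      rw [Finset.mul_sum]
      exact Finset.sum_congr rfl fun k _ => by ring
    calc q x * (f x - ∑ j, α j * a j x)^2
        = q x * f x ^ 2 - 2 * (q x * f x * (∑ j, α j * a j x))
          + q x * ((∑ j, α j * a j x) * (∑ k, α k * a k x)) := by ring
      _ = _ := by rw [e1, e2]
  have expand : ∑ x, q x * (f x - ∑ j, α j * a j x)^2 = 1 - ∑ j, α j ^ 2 := by
    simp_rw [step]
    rw [Finset.sum_add_distrib, Finset.sum_sub_distrib, hf]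
    have h1 : ∑ x, 2 * (∑ j, α j * (q x * f x * a j x)) = 2 * ∑ j, α j ^ 2 := by
      rw [← Finset.mul_sum, Finset.sum_comm]
      congr 1
      refine Finset.sum_congr rfl fun j _ => ?_
      rw [← Finset.mul_sum]
      change α j * α j = _
      ring
    have h2 : ∑ x : X, ∑ j, ∑ k, α j * α k * (q x * a j x * a k x) = ∑ j, α j ^ 2 := by
      rw [Finset.sum_comm]
      refine Eq.trans (Finset.sum_congr rfl fun j _ => Finset.sum_comm) ?_
      have hjk : ∀ j k : Fin D, ∑ x, α j * α k * (q x * a j x * a k x)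
          = α j * α k * (if j = k then (1:ℝ) else 0) := fun j k => by
        rw [← Finset.mul_sum, ha j k]
      simp_rw [hjk]
      simp [Finset.sum_ite_eq, sq]
    rw [h1, h2]; ring
  linarith [expand ▸ h0]

lemma corr_expand_aux {X Y : Type*} [Fintype X] [Fintype Y] {D : ℕ}
    (p : X → Y → ℝ) (a : Fin D → X → ℝ) (b : Fin D → Y → ℝ) (η : Fin D → ℝ)
    (hrep : ∀ x y,
      p x y = (∑ y', p x y') * (∑ x', p x' y) * ∑ j, η j * a j x * b j y)
    (f : X → ℝ) (g : Y → ℝ) :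
    ∑ x, ∑ y, p x y * f x * g y
      = ∑ j, η j * (∑ x, (∑ y', p x y') * f x * a j x) * (∑ y, (∑ x', p x' y) * g y * b j y) := by
  have step : ∀ x y, p x y * f x * g y
      = ∑ j, η j * ((∑ y', p x y') * f x * a j x) * ((∑ x', p x' y) * g y * b j y) := by
    intro x y
    rw [hrep x y, Finset.mul_sum, Finset.sum_mul, Finset.sum_mul]
    exact Finset.sum_congr rfl fun j _ => by ring
  simp_rw [step]
  rw [Finset.sum_comm]
  rw [Finset.sum_congr rfl fun y (_ : y ∈ univ) => Finset.sum_comm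
    (s := univ (α := X)) (t := univ (α := Fin D))]
  rw [Finset.sum_comm]
  refine Finset.sum_congr rfl fun j _ => ?_
  rw [mul_assoc, Finset.sum_mul_sum, Finset.mul_sum]
  rw [Finset.sum_comm]
  refine Finset.sum_congr rfl fun y _ => ?_
  rw [Finset.mul_sum]
  exact Finset.sum_congr rfl fun x _ => by ring

/-- Variational characterization of the top nontrivial canonical correlation: for
centered, unit-variance features `f`, `g`, the correlation `Σ_{x,y} p(x,y) f(x) g(y)`
is at most `η₂`, with equality attained by the second canonical pair `(a₂, b₂)`. -/
theorem stmt_13 (X Y : Type*) [Fintype X] [Fintype Y] [Nonempty X] [Nonempty Y]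
    (p : X → Y → ℝ)
    (hp : ∀ x y, 0 ≤ p x y)
    (hsum : ∑ x, ∑ y, p x y = 1)
    (hpX : ∀ x, 0 < ∑ y, p x y)
    (hpY : ∀ y, 0 < ∑ x, p x y)
    (D : ℕ) (hD : 2 ≤ D)
    (a : Fin D → X → ℝ) (b : Fin D → Y → ℝ) (η : Fin D → ℝ)
    (ha : ∀ i j, ∑ x, (∑ y, p x y) * a i x * a j x = if i = j then (1 : ℝ) else 0)
    (hb : ∀ i j, ∑ y, (∑ x, p x y) * b i y * b j y = if i = j then (1 : ℝ) else 0)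
    (ha1 : ∀ x, a ⟨0, by omega⟩ x = 1)
    (hb1 : ∀ y, b ⟨0, by omega⟩ y = 1)
    (hη1 : η ⟨0, by omega⟩ = 1)
    (hη_mono : ∀ i j : Fin D, i ≤ j → η j ≤ η i)
    (hη_nonneg : ∀ j, 0 ≤ η j)
    (hrep : ∀ x y,
      p x y = (∑ y', p x y') * (∑ x', p x' y) * ∑ j, η j * a j x * b j y) :
    (∀ (f : X → ℝ) (g : Y → ℝ),
      ∑ x, (∑ y, p x y) * f x = 0 →
      ∑ y, (∑ x, p x y) * g y = 0 →
      ∑ x, (∑ y, p x y) * f x ^ 2 = 1 →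
      ∑ y, (∑ x, p x y) * g y ^ 2 = 1 →
      ∑ x, ∑ y, p x y * f x * g y ≤ η ⟨1, by omega⟩) ∧
    ∑ x, ∑ y, p x y * a ⟨1, by omega⟩ x * b ⟨1, by omega⟩ y = η ⟨1, by omega⟩ := by
  have h0D : 0 < D := by omega
  have h1D : 1 < D := by omega
  constructor
  · intro f g hf0 hg0 hf2 hg2
    set α : Fin D → ℝ := fun j => ∑ x, (∑ y, p x y) * f x * a j x with hαdef
    set β : Fin D → ℝ := fun j => ∑ y, (∑ x, p x y) * g y * b j y with hβdef
    rw [corr_expand_aux p a b η hrep f g]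
    have hα0 : α ⟨0, h0D⟩ = 0 := by
      rw [hαdef]
      simp only [ha1, mul_one]
      exact hf0
    have hbα : ∑ j, α j ^ 2 ≤ 1 :=
      bessel_aux _ (fun x => (hpX x).le) a ha f hf2
    have hbβ : ∑ j, β j ^ 2 ≤ 1 :=
      bessel_aux _ (fun y => (hpY y).le) b hb g hg2
    have habs : ∑ j, |α j| * |β j| ≤ 1 := by
      have hcs := Finset.sum_mul_sq_le_sq_mul_sq univ (fun j => |α j|) (fun j => |β j|)
      simp only [sq_abs] at hcs
      have hnn : 0 ≤ ∑ j, |α j| * |β j| :=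
        Finset.sum_nonneg fun j _ => mul_nonneg (abs_nonneg _) (abs_nonneg _)
      have hA : 0 ≤ ∑ j, α j ^ 2 := Finset.sum_nonneg fun j _ => sq_nonneg _
      have hB : 0 ≤ ∑ j, β j ^ 2 := Finset.sum_nonneg fun j _ => sq_nonneg _
      nlinarith
    have hterm : ∑ j, η j * α j * β j ≤ ∑ j, η ⟨1, h1D⟩ * (|α j| * |β j|) := by
      refine Finset.sum_le_sum fun j _ => ?_
      by_cases hj : j = ⟨0, h0D⟩
      · subst hj
        rw [hα0]; simp
      · have hle : (⟨1, h1D⟩ : Fin D) ≤ j := by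
          have : j.val ≠ 0 := fun h => hj (Fin.ext h)
          exact Fin.mk_le_of_le_val (by omega)
        calc η j * α j * β j ≤ η j * (|α j| * |β j|) := by
              rw [mul_assoc]
              refine mul_le_mul_of_nonneg_left ?_ (hη_nonneg j)
              calc α j * β j ≤ |α j * β j| := le_abs_self _
                _ = |α j| * |β j| := abs_mul _ _
          _ ≤ η ⟨1, h1D⟩ * (|α j| * |β j|) :=
              mul_le_mul_of_nonneg_right (hη_mono _ _ hle)
                (mul_nonneg (abs_nonneg _) (abs_nonneg _))
    calc ∑ j, η j * α j * β j ≤ ∑ j, η ⟨1, h1D⟩ * (|α j| * |β j|) := hterm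
      _ = η ⟨1, h1D⟩ * ∑ j, |α j| * |β j| := by rw [Finset.mul_sum]
      _ ≤ η ⟨1, h1D⟩ * 1 := mul_le_mul_of_nonneg_left habs (hη_nonneg _)
      _ = η ⟨1, h1D⟩ := mul_one _
  · rw [corr_expand_aux p a b η hrep]
    simp_rw [ha ⟨1, h1D⟩, hb ⟨1, h1D⟩]
    rw [Finset.sum_eq_single ⟨1, h1D⟩]
    · simp
    · intro j _ hj
      simp [Ne.symm hj]
    · simp
end

section
/- Let X and ε be independent real random variables on a probability space, with X Gaussian of mean 0 and variance τ² and ε Gaussian of mean 0 and variance σ², where τ, σ > 0. Set Y = X + ε and γ = τ²/(σ² + τ²). Then the conditional expectation of X given the σ-algebra generated by Y satisfies E[X | Y] = γ·Y almost surely. -/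
open MeasureTheory ProbabilityTheory
open scoped NNReal

/-!
`(X, ε)` is a Gaussian vector, hence so is its linear image `(X - γY, Y)`, and `γ` is precisely
the coefficient for which `Cov(X - γY, Y) = τ² - γ(σ² + τ²)` vanishes. Uncorrelated jointly
Gaussian variables are independent, so `E[X - γY | Y] = E[X - γY] = 0`, while `E[γY | Y] = γY`.
-/

namespace ProbabilityTheory

variable {Ω : Type*} {mΩ : MeasurableSpace Ω} {μ : Measure Ω}

lemma IndepFun.condExp_comap_ae_eq_integral {E β : Type*} [NormedAddCommGroup E]
    [NormedSpace ℝ E] [CompleteSpace E] [MeasurableSpace E] [BorelSpace E]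
    [SecondCountableTopology E] [mβ : MeasurableSpace β] [IsFiniteMeasure μ]
    {Z : Ω → E} {Y : Ω → β} (hZ : Measurable Z) (hY : Measurable Y) (h : IndepFun Z Y μ) :
    μ[Z | mβ.comap Y] =ᵐ[μ] fun _ ↦ μ[Z] :=
  condExp_indep_eq hZ.comap_le hY.comap_le
    (measurable_iff_comap_le.2 le_rfl).stronglyMeasurable h

lemma HasGaussianLaw.prodMk_linComb {X Y : Ω → ℝ}
    (hXY : HasGaussianLaw (fun ω ↦ (X ω, Y ω)) μ) (a b c d : ℝ) :
    HasGaussianLaw (fun ω ↦ (a * X ω + b * Y ω, c * X ω + d * Y ω)) μ :=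
  hXY.map_fun ((a • ContinuousLinearMap.fst ℝ ℝ ℝ + b • ContinuousLinearMap.snd ℝ ℝ ℝ).prod
    (c • ContinuousLinearMap.fst ℝ ℝ ℝ + d • ContinuousLinearMap.snd ℝ ℝ ℝ))

lemma IndepFun.covariance_add_right_self_eq [IsFiniteMeasure μ] {X ε : Ω → ℝ}
    (h : IndepFun X ε μ) (hX : MemLp X 2 μ) (hε : MemLp ε 2 μ) :
    cov[X, X + ε; μ] = Var[X; μ] / (Var[ε; μ] + Var[X; μ]) * Var[X + ε; μ] := by
  rw [covariance_add_right hX hX hε, covariance_self hX.aemeasurable, h.covariance_eq_zero hX hε,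
    h.variance_add hX hε, add_zero, add_comm Var[X; μ], div_mul_cancel_of_imp]
  -- if both variances vanish, the ratio is `0` by the convention `x / 0 = 0`
  intro h0
  linarith [variance_nonneg X μ, variance_nonneg ε μ]

lemma HasGaussianLaw.condExp_comap_ae_eq {X Y : Ω → ℝ} (hX : Measurable X) (hY : Measurable Y)
    (hXY : HasGaussianLaw (fun ω ↦ (X ω, Y ω)) μ) {c : ℝ} (hc : cov[X, Y; μ] = c * Var[Y; μ]) :
    μ[X | MeasurableSpace.comap Y inferInstance] =ᵐ[μ] fun ω ↦ μ[X] + c * (Y ω - μ[Y]) := by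
  have := hXY.isProbabilityMeasure
  set Z : Ω → ℝ := fun ω ↦ X ω - c * Y ω
  have hX2 : MemLp X 2 μ := hXY.fst.memLp_two
  have hY2 : MemLp Y 2 μ := hXY.snd.memLp_two
  have hZY : HasGaussianLaw (fun ω ↦ (Z ω, Y ω)) μ := by
    simpa [Z, sub_eq_add_neg] using hXY.prodMk_linComb 1 (-c) 0 1
  have hcov : cov[Z, Y; μ] = 0 := by
    rw [covariance_fun_sub_left hX2 (hY2.const_mul c) hY2, covariance_const_mul_left,
      covariance_self hY.aemeasurable, hc, sub_self]
  have hZ_indep : IndepFun Z Y μ := hZY.indepFun_of_covariance_eq_zero hcov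
  have hcY_int : Integrable (fun ω ↦ c * Y ω) μ := (hY2.integrable one_le_two).const_mul c
  have hZ_int : Integrable Z μ := (hX2.integrable one_le_two).sub hcY_int
  have hcY : μ[fun ω ↦ c * Y ω | MeasurableSpace.comap Y inferInstance] = fun ω ↦ c * Y ω :=
    condExp_of_stronglyMeasurable hY.comap_le
      ((measurable_iff_comap_le.2 le_rfl).const_mul c).stronglyMeasurable hcY_int
  have hZ_mean : μ[Z] = μ[X] - c * μ[Y] := by
    rw [integral_sub (hX2.integrable one_le_two) hcY_int, integral_const_mul]
  have hZ_meas : Measurable Z := hX.sub (hY.const_mul c)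
  have hXZ : X = Z + fun ω ↦ c * Y ω := by ext; simp [Z]
  have hadd : μ[X | MeasurableSpace.comap Y inferInstance] =ᵐ[μ]
      μ[Z | MeasurableSpace.comap Y inferInstance] + fun ω ↦ c * Y ω := by
    rw [← hcY, hXZ]
    exact condExp_add hZ_int hcY_int _
  filter_upwards [hadd, hZ_indep.condExp_comap_ae_eq_integral hZ_meas hY] with ω hadd hZ
  rw [hadd, Pi.add_apply, hZ, hZ_mean]
  ring

end ProbabilityTheory

theorem stmt_15_general {Ω : Type*} [MeasurableSpace Ω] (μ : Measure Ω) [IsProbabilityMeasure μ]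
    (X ε : Ω → ℝ) (hX : Measurable X) (hε : Measurable ε)
    (hindep : IndepFun X ε μ)
    (τ σ : ℝ≥0)
    (hXlaw : μ.map X = gaussianReal 0 (τ ^ 2))
    (hεlaw : μ.map ε = gaussianReal 0 (σ ^ 2))
    (Y : Ω → ℝ) (hY : Y = X + ε)
    (γ : ℝ) (hγ : γ = (τ : ℝ) ^ 2 / ((σ : ℝ) ^ 2 + (τ : ℝ) ^ 2)) :
    μ[X | MeasurableSpace.comap Y Real.measurableSpace] =ᵐ[μ] fun ω => γ * Y ω := by
  have hX_law : HasLaw X (gaussianReal 0 (τ ^ 2)) μ := ⟨hX.aemeasurable, hXlaw⟩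
  have hε_law : HasLaw ε (gaussianReal 0 (σ ^ 2)) μ := ⟨hε.aemeasurable, hεlaw⟩
  have hXε : HasGaussianLaw (fun ω ↦ (X ω, ε ω)) μ :=
    hindep.hasGaussianLaw hX_law.hasGaussianLaw hε_law.hasGaussianLaw
  have hXY : HasGaussianLaw (fun ω ↦ (X ω, Y ω)) μ := by
    simpa [hY] using hXε.prodMk_linComb 1 0 1 1
  have hX2 : MemLp X 2 μ := hXε.fst.memLp_two
  have hε2 : MemLp ε 2 μ := hXε.snd.memLp_two
  have hvarX : Var[X; μ] = (τ : ℝ) ^ 2 := by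
    rw [hX_law.variance_eq, variance_id_gaussianReal, NNReal.coe_pow]
  have hvarε : Var[ε; μ] = (σ : ℝ) ^ 2 := by
    rw [hε_law.variance_eq, variance_id_gaussianReal, NNReal.coe_pow]
  have hcov : cov[X, Y; μ] = γ * Var[Y; μ] := by
    rw [hY, hγ, ← hvarX, ← hvarε]
    exact hindep.covariance_add_right_self_eq hX2 hε2
  have hmeanX : μ[X] = 0 := by rw [hX_law.integral_eq, integral_id_gaussianReal]
  have hmeanε : μ[ε] = 0 := by rw [hε_law.integral_eq, integral_id_gaussianReal]
  have hmeanY : μ[Y] = 0 := by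
    rw [hY, integral_add' (hX2.integrable one_le_two) (hε2.integrable one_le_two), hmeanX, hmeanε,
      add_zero]
  filter_upwards [hXY.condExp_comap_ae_eq hX (hY ▸ hX.add hε) hcov] with ω h
  rw [h, hmeanX, hmeanY, zero_add, sub_zero]

/-- For jointly Gaussian `X ~ N(0,τ²)` and `Y = X + ε` with independent noise
`ε ~ N(0,σ²)`, the conditional expectation of `X` given `Y` is `E[X | Y] = γ·Y` a.s.,
where `γ = τ²/(σ² + τ²)`. -/
theorem stmt_15 {Ω : Type*} [MeasurableSpace Ω] (μ : Measure Ω) [IsProbabilityMeasure μ]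
    (X ε : Ω → ℝ) (hX : Measurable X) (hε : Measurable ε)
    (hindep : IndepFun X ε μ)
    (τ σ : ℝ≥0) (hτ : 0 < τ) (hσ : 0 < σ)
    (hXlaw : μ.map X = gaussianReal 0 (τ ^ 2))
    (hεlaw : μ.map ε = gaussianReal 0 (σ ^ 2))
    (Y : Ω → ℝ) (hY : Y = X + ε)
    (γ : ℝ) (hγ : γ = (τ : ℝ) ^ 2 / ((σ : ℝ) ^ 2 + (τ : ℝ) ^ 2)) :
    μ[X | MeasurableSpace.comap Y Real.measurableSpace] =ᵐ[μ] fun ω => γ * Y ω :=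
  stmt_15_general μ X ε hX hε hindep τ σ hXlaw hεlaw Y hY γ hγ
end

section
/- Let X and ε be independent real random variables on a probability space, with X Gaussian of mean 0 and variance τ² and ε Gaussian of mean 0 and variance σ², where τ, σ > 0; set Y = X + ε and γ = τ²/(σ² + τ²). Define the 3 × 3 real matrices indexed by i, j ∈ {0,1,2}: K_{ij} = E[X^{i+j}], L_{ij} = E[Y^{i+j}], and A_{ij} = E[Y^i · X^j]. Then K and L are invertible and K⁻¹ Aᵀ L⁻¹ A equals the upper-triangular matrix with rows (1, 0, τ²(1 − γ²)), (0, γ, 0), (0, 0, γ²); in particular its eigenvalues are 1, γ and γ², so the three most relevant monomial features of the bivariate Gaussian model have relevances 1, γ and γ². -/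
/-!
A centred Gaussian `Z ~ N(0, v)` has vanishing odd moments and, by integration by parts against
its density, `E[Z^(n+2)] = (n+1) v E[Z^n]`. Hence `K` and `L` are the moment matrices of
`N(0, τ²)` and `N(0, τ² + σ²)` (the law of `Y` as a sum of independent Gaussians), and expanding
`(X + ε)^i` binomially and using independence gives `A`. With `t = τ²`, `u = σ²`, one finds
`K⁻¹ Aᵀ = [[1, 0, u], [0, 1, 0], [0, 0, 1]]` and `L⁻¹ A = [[1, 0, u γ], [0, γ, 0], [0, 0, γ²]]`,
whose product is the claimed upper-triangular matrix.
-/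

open MeasureTheory ProbabilityTheory Matrix Finset
open scoped NNReal Nat

open Real in
lemma hasDerivAt_gaussianPDFReal (m : ℝ) (v : ℝ≥0) (x : ℝ) :
    HasDerivAt (gaussianPDFReal m v) (-((x - m) / v) * gaussianPDFReal m v x) x := by
  have h := ((hasDerivAt_pow 2 (x - m)).comp_sub_const x m).neg.div_const (2 * (v : ℝ))
  refine (h.exp.const_mul (√(2 * π * v))⁻¹).congr_deriv ?_
  simp only [gaussianPDFReal, Pi.neg_apply]
  rcases eq_or_ne (v : ℝ) 0 with hv | hv
  · simp [hv]
  · field_simp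
    ring

lemma integrable_pow_gaussianReal (m : ℝ) (v : ℝ≥0) (n : ℕ) :
    Integrable (fun x : ℝ => x ^ n) (gaussianReal m v) :=
  (memLp_id_gaussianReal n).integrable_norm_pow'.mono' (by fun_prop)
    (ae_of_all _ fun x => by simp [norm_pow])

lemma integrable_pow_mul_gaussianPDFReal (m : ℝ) {v : ℝ≥0} (hv : v ≠ 0) (n : ℕ) :
    Integrable (fun x : ℝ => x ^ n * gaussianPDFReal m v x) := by
  have h := integrable_pow_gaussianReal m v n
  rw [gaussianReal_of_var_ne_zero m hv, integrable_withDensity_iff (measurable_gaussianPDF m v)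
    (ae_of_all _ fun _ => gaussianPDF_lt_top)] at h
  simpa only [toReal_gaussianPDF] using h

/-- Gaussian integration by parts (Stein's identity) applied to `x ^ (n + 1)`. -/
lemma integral_pow_add_two_gaussianReal (v : ℝ≥0) (n : ℕ) :
    ∫ x, x ^ (n + 2) ∂gaussianReal 0 v = (n + 1) * v * ∫ x, x ^ n ∂gaussianReal 0 v := by
  rcases eq_or_ne v 0 with rfl | hv
  · simp
  have hv' : (v : ℝ) ≠ 0 := by exact_mod_cast hv
  have hint (k : ℕ) : Integrable (fun x : ℝ => x ^ k * gaussianPDFReal 0 v x) :=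
    integrable_pow_mul_gaussianPDFReal 0 hv k
  have hderiv (x : ℝ) : HasDerivAt (fun x => x ^ (n + 1) * gaussianPDFReal 0 v x)
      ((n + 1) * (x ^ n * gaussianPDFReal 0 v x) -
        (v : ℝ)⁻¹ * (x ^ (n + 2) * gaussianPDFReal 0 v x)) x := by
    refine ((hasDerivAt_pow (n + 1) x).mul (hasDerivAt_gaussianPDFReal 0 v x)).congr_deriv ?_
    field_simp
    push_cast
    ring
  have h := integral_eq_zero_of_hasDerivAt_of_integrable hderiv
    (((hint n).const_mul _).sub ((hint (n + 2)).const_mul _)) (hint (n + 1))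
  rw [integral_sub ((hint n).const_mul _) ((hint (n + 2)).const_mul _), integral_const_mul,
    integral_const_mul] at h
  simp only [integral_gaussianReal_eq_integral_smul hv, smul_eq_mul,
    mul_comm (gaussianPDFReal 0 v _)]
  field_simp at h
  linear_combination -h

-- For `n = 0` the truncated subtraction gives `0‼ = 1`, the usual value of `(-1)‼`.
lemma integral_pow_gaussianReal (v : ℝ≥0) (n : ℕ) :
    ∫ x, x ^ n ∂gaussianReal 0 v = if Even n then (v : ℝ) ^ (n / 2) * (n - 1)‼ else 0 := by
  induction n using Nat.twoStepInduction with
  | zero => simp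
  | one => simp
  | more n ih _ =>
    have hfac : ((n + 2 - 1)‼ : ℝ) = (n + 1) * (n - 1)‼ := by
      rcases n with _ | n
      · simp
      · push_cast [Nat.add_sub_cancel, Nat.doubleFactorial_add_two]
        ring
    have heven : Even (n + 2) ↔ Even n := by simp [Nat.even_add]
    rw [integral_pow_add_two_gaussianReal, ih, Nat.add_div_right n two_pos, hfac]
    simp only [heven]
    split_ifs <;> ring

def gaussianMomentMatrix (v : ℝ) : Matrix (Fin 3) (Fin 3) ℝ :=
  !![1, 0, v; 0, v, 0; v, 0, 3 * v ^ 2]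

def gaussianCrossMomentMatrix (t u : ℝ) : Matrix (Fin 3) (Fin 3) ℝ :=
  !![1, 0, t; 0, t, 0; t + u, 0, 3 * t ^ 2 + t * u]

lemma det_gaussianMomentMatrix (v : ℝ) : (gaussianMomentMatrix v).det = 2 * v ^ 3 := by
  rw [gaussianMomentMatrix, det_fin_three]
  simp only [Fin.isValue, of_apply, cons_val', cons_val_zero, cons_val_fin_one, cons_val_one,
    one_mul, Matrix.cons_val, mul_zero, sub_zero, zero_mul, add_zero]
  ring

lemma inv_gaussianMomentMatrix {v : ℝ} (hv : v ≠ 0) :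
    (gaussianMomentMatrix v)⁻¹ =
      !![3 / 2, 0, -1 / (2 * v); 0, 1 / v, 0; -1 / (2 * v), 0, 1 / (2 * v ^ 2)] := by
  refine inv_eq_right_inv ?_
  ext i j
  fin_cases i <;> fin_cases j <;> simp [gaussianMomentMatrix, mul_apply, Fin.sum_univ_three] <;>
    field_simp <;> ring

lemma inv_gaussianMomentMatrix_mul_transpose {t : ℝ} (ht : t ≠ 0) (u : ℝ) :
    (gaussianMomentMatrix t)⁻¹ * (gaussianCrossMomentMatrix t u)ᵀ =
      !![1, 0, u; 0, 1, 0; 0, 0, 1] := by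
  rw [inv_gaussianMomentMatrix ht]
  ext i j
  fin_cases i <;> fin_cases j <;>
    simp [gaussianCrossMomentMatrix, mul_apply, Fin.sum_univ_three] <;> field_simp <;> ring

lemma inv_gaussianMomentMatrix_add_mul {t u γ : ℝ} (hut : u + t ≠ 0) (hγ : γ = t / (u + t)) :
    (gaussianMomentMatrix (t + u))⁻¹ * gaussianCrossMomentMatrix t u =
      !![1, 0, u * γ; 0, γ, 0; 0, 0, γ ^ 2] := by
  have hs : t + u ≠ 0 := by rwa [add_comm]
  rw [inv_gaussianMomentMatrix hs, hγ]
  ext i j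
  fin_cases i <;> fin_cases j <;>
    simp [gaussianCrossMomentMatrix, mul_apply, Fin.sum_univ_three] <;> field_simp <;> ring

lemma inv_gaussianMomentMatrix_mul_transpose_mul_inv_mul {t u γ : ℝ} (ht : t ≠ 0) (hut : u + t ≠ 0)
    (hγ : γ = t / (u + t)) :
    (gaussianMomentMatrix t)⁻¹ * (gaussianCrossMomentMatrix t u)ᵀ *
        (gaussianMomentMatrix (t + u))⁻¹ * gaussianCrossMomentMatrix t u =
      !![1, 0, t * (1 - γ ^ 2); 0, γ, 0; 0, 0, γ ^ 2] := by
  rw [mul_assoc, inv_gaussianMomentMatrix_mul_transpose ht, inv_gaussianMomentMatrix_add_mul hut hγ]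
  have hγ' : t * (1 - γ ^ 2) = u * γ + u * γ ^ 2 := by rw [hγ]; field_simp; ring
  ext i j
  fin_cases i <;> fin_cases j <;> simp [mul_apply, Fin.sum_univ_three, hγ']

namespace ProbabilityTheory

variable {Ω : Type*} [MeasurableSpace Ω] {μ : Measure Ω} {X ε : Ω → ℝ}

lemma hasLaw_of_map_eq {𝓧 : Type*} [MeasurableSpace 𝓧] {ν : Measure 𝓧} [NeZero ν] {Z : Ω → 𝓧}
    (h : μ.map Z = ν) : HasLaw Z ν μ :=
  ⟨aemeasurable_of_map_neZero (h ▸ inferInstance), h⟩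

lemma HasLaw.integrable_pow_gaussianReal {m : ℝ} {v : ℝ≥0} (hX : HasLaw X (gaussianReal m v) μ)
    (n : ℕ) : Integrable (fun ω => X ω ^ n) μ :=
  (integrable_map_measure (g := fun x : ℝ => x ^ n) (by fun_prop) hX.aemeasurable).mp
    (hX.map_eq ▸ _root_.integrable_pow_gaussianReal m v n)

lemma HasLaw.integral_pow_gaussianReal {v : ℝ≥0} (hX : HasLaw X (gaussianReal 0 v) μ) (n : ℕ) :
    ∫ ω, X ω ^ n ∂μ = if Even n then (v : ℝ) ^ (n / 2) * (n - 1)‼ else 0 :=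
  (hX.integral_comp (f := fun x : ℝ => x ^ n) (by fun_prop)).trans
    (_root_.integral_pow_gaussianReal v n)

lemma IndepFun.integral_add_pow_mul_pow (h : IndepFun X ε μ)
    (hX : ∀ n, Integrable (fun ω => X ω ^ n) μ) (hε : ∀ n, Integrable (fun ω => ε ω ^ n) μ)
    (i j : ℕ) :
    ∫ ω, (X ω + ε ω) ^ i * X ω ^ j ∂μ =
      ∑ k ∈ range (i + 1), (∫ ω, X ω ^ (k + j) ∂μ) * (∫ ω, ε ω ^ (i - k) ∂μ) * i.choose k := by
  have hindep (a b : ℕ) : IndepFun (fun ω => X ω ^ a) (fun ω => ε ω ^ b) μ :=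
    h.comp (measurable_id.pow_const a) (measurable_id.pow_const b)
  have hint (a b : ℕ) : Integrable (fun ω => X ω ^ a * ε ω ^ b) μ :=
    (hindep a b).integrable_mul (hX a) (hε b)
  have hexpand (ω : Ω) : (X ω + ε ω) ^ i * X ω ^ j =
      ∑ k ∈ range (i + 1), X ω ^ (k + j) * ε ω ^ (i - k) * i.choose k := by
    rw [add_pow, sum_mul]
    exact sum_congr rfl fun k _ => by ring
  simp_rw [hexpand]
  rw [integral_finsetSum _ fun k _ => (hint _ _).mul_const _]
  refine sum_congr rfl fun k _ => ?_
  rw [integral_mul_const, (hindep _ _).integral_fun_mul_eq_mul_integral (hX _).1 (hε _).1]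

lemma HasLaw.eq_gaussianMomentMatrix {v : ℝ≥0} (hX : HasLaw X (gaussianReal 0 v) μ)
    {K : Matrix (Fin 3) (Fin 3) ℝ} (hK : ∀ i j : Fin 3, K i j = ∫ ω, X ω ^ ((i : ℕ) + j) ∂μ) :
    K = gaussianMomentMatrix v := by
  ext i j
  rw [hK, hX.integral_pow_gaussianReal]
  fin_cases i <;> fin_cases j <;> simp [gaussianMomentMatrix, Nat.even_iff, Nat.doubleFactorial]
  ring

lemma IndepFun.eq_gaussianCrossMomentMatrix {t u : ℝ≥0} (h : IndepFun X ε μ)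
    (hX : HasLaw X (gaussianReal 0 t) μ) (hε : HasLaw ε (gaussianReal 0 u) μ)
    {A : Matrix (Fin 3) (Fin 3) ℝ}
    (hA : ∀ i j : Fin 3, A i j = ∫ ω, (X ω + ε ω) ^ (i : ℕ) * X ω ^ (j : ℕ) ∂μ) :
    A = gaussianCrossMomentMatrix t u := by
  ext i j
  rw [hA, h.integral_add_pow_mul_pow hX.integrable_pow_gaussianReal hε.integrable_pow_gaussianReal]
  simp only [hX.integral_pow_gaussianReal, hε.integral_pow_gaussianReal]
  fin_cases i <;> fin_cases j <;>
    simp [sum_range_succ, gaussianCrossMomentMatrix, Nat.even_iff, Nat.doubleFactorial]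
  all_goals ring

end ProbabilityTheory

theorem stmt_18_general {Ω : Type*} [MeasurableSpace Ω] (μ : Measure Ω)
    (X ε : Ω → ℝ)
    (hindep : IndepFun X ε μ)
    (τ σ : ℝ≥0) (hτ : 0 < τ)
    (hXlaw : μ.map X = gaussianReal 0 (τ ^ 2))
    (hεlaw : μ.map ε = gaussianReal 0 (σ ^ 2))
    (Y : Ω → ℝ) (hY : Y = X + ε)
    (γ : ℝ) (hγ : γ = (τ : ℝ) ^ 2 / ((σ : ℝ) ^ 2 + (τ : ℝ) ^ 2))
    (K L A : Matrix (Fin 3) (Fin 3) ℝ)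
    (hK : ∀ i j, K i j = ∫ ω, X ω ^ ((i : ℕ) + (j : ℕ)) ∂μ)
    (hL : ∀ i j, L i j = ∫ ω, Y ω ^ ((i : ℕ) + (j : ℕ)) ∂μ)
    (hA : ∀ i j, A i j = ∫ ω, Y ω ^ (i : ℕ) * X ω ^ (j : ℕ) ∂μ) :
    IsUnit K.det ∧ IsUnit L.det ∧
      K⁻¹ * Aᵀ * L⁻¹ * A =
        !![1, 0, (τ : ℝ) ^ 2 * (1 - γ ^ 2); 0, γ, 0; 0, 0, γ ^ 2] := by
  subst hY
  simp only [Pi.add_apply] at hA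
  have hXlaw' : HasLaw X (gaussianReal 0 (τ ^ 2)) μ := hasLaw_of_map_eq hXlaw
  have hεlaw' : HasLaw ε (gaussianReal 0 (σ ^ 2)) μ := hasLaw_of_map_eq hεlaw
  have hYlaw : HasLaw (X + ε) (gaussianReal 0 (τ ^ 2 + σ ^ 2)) μ :=
    hasLaw_of_map_eq (by simpa using gaussianReal_add_gaussianReal_of_indepFun hindep hXlaw hεlaw)
  rw [hXlaw'.eq_gaussianMomentMatrix hK, hYlaw.eq_gaussianMomentMatrix hL,
    hindep.eq_gaussianCrossMomentMatrix hXlaw' hεlaw' hA, det_gaussianMomentMatrix,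
    det_gaussianMomentMatrix]
  push_cast
  have ht : (τ : ℝ) ^ 2 ≠ 0 := by positivity
  have hut : (σ : ℝ) ^ 2 + (τ : ℝ) ^ 2 ≠ 0 := by positivity
  refine ⟨isUnit_iff_ne_zero.mpr (by positivity), isUnit_iff_ne_zero.mpr (by positivity), ?_⟩
  exact inv_gaussianMomentMatrix_mul_transpose_mul_inv_mul ht hut hγ

/-- For the bivariate Gaussian model `Y = X + ε` (with `X ~ N(0,τ²)`, `ε ~ N(0,σ²)`
independent), the matrices of moments `K_{ij} = E[X^{i+j}]`, `L_{ij} = E[Y^{i+j}]`,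
`A_{ij} = E[Y^i X^j]` (for `i,j ∈ {0,1,2}`) are such that `K` and `L` are invertible
and `K⁻¹ Aᵀ L⁻¹ A` is upper triangular with diagonal `(1, γ, γ²)`; in particular the
three most relevant monomial features have relevances `1`, `γ` and `γ²`. -/
theorem stmt_18 {Ω : Type*} [MeasurableSpace Ω] (μ : Measure Ω) [IsProbabilityMeasure μ]
    (X ε : Ω → ℝ) (hX : Measurable X) (hε : Measurable ε)
    (hindep : IndepFun X ε μ)
    (τ σ : ℝ≥0) (hτ : 0 < τ) (hσ : 0 < σ)
    (hXlaw : μ.map X = gaussianReal 0 (τ ^ 2))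
    (hεlaw : μ.map ε = gaussianReal 0 (σ ^ 2))
    (Y : Ω → ℝ) (hY : Y = X + ε)
    (γ : ℝ) (hγ : γ = (τ : ℝ) ^ 2 / ((σ : ℝ) ^ 2 + (τ : ℝ) ^ 2))
    (K L A : Matrix (Fin 3) (Fin 3) ℝ)
    (hK : ∀ i j, K i j = ∫ ω, X ω ^ ((i : ℕ) + (j : ℕ)) ∂μ)
    (hL : ∀ i j, L i j = ∫ ω, Y ω ^ ((i : ℕ) + (j : ℕ)) ∂μ)
    (hA : ∀ i j, A i j = ∫ ω, Y ω ^ (i : ℕ) * X ω ^ (j : ℕ) ∂μ) :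
    IsUnit K.det ∧ IsUnit L.det ∧
      K⁻¹ * Aᵀ * L⁻¹ * A =
        !![1, 0, (τ : ℝ) ^ 2 * (1 - γ ^ 2); 0, γ, 0; 0, 0, γ ^ 2] :=
  stmt_18_general μ X ε hindep τ σ hτ hXlaw hεlaw Y hY γ hγ K L A hK hL hA
end
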